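/- arXiv:2511.13455 — 2 statements merged into one kernel-verified Lean document; each statement's English description precedes it below -/
import Mathlib

section
/- If ‖w‖₁ > B̃ and λ* > 0 is such that ‖S_{λ*}(w)‖₁ = B̃, then S_{λ*}(w) is the Euclidean projection of w onto the ℓ1-ball of radius B̃. -/
/-!
Write `p = S_λ(w)`. Coordinatewise, `|wᵢ - pᵢ| ≤ λ` and `(wᵢ - pᵢ) pᵢ = λ |pᵢ|`, i.e. `w - p` is
`λ` times a subgradient of `‖·‖₁` at `p`. Hence `⟪z - p, w - p⟫ ≤ λ (‖z‖₁ - ‖p‖₁) ≤ 0` for every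
`z` in the ball, and the obtuse angle at `p` gives `‖z - p‖² + ‖p - w‖² ≤ ‖z - w‖²`, which is
both minimality and uniqueness.
-/

open Finset

/-- Componentwise soft-thresholding operator. -/
noncomputable def softThresh {n : ℕ} (h : ℝ) (w : EuclideanSpace ℝ (Fin n)) :
    EuclideanSpace ℝ (Fin n) :=
  WithLp.toLp 2 (fun i => Real.sign (w i) * max (|w i| - h) 0)

/-- The ℓ1-norm on ℝⁿ. -/
noncomputable def l1norm {n : ℕ} (w : EuclideanSpace ℝ (Fin n)) : ℝ :=
  ∑ i, |w i|

theorem abs_sub_sign_mul_max_abs_sub_le {lam : ℝ} (hlam : 0 ≤ lam) (a : ℝ) :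
    |a - Real.sign a * max (|a| - lam) 0| ≤ lam := by
  rcases lt_trichotomy a 0 with h | rfl | h
  · rw [Real.sign_of_neg h, abs_of_neg h, abs_le]
    constructor <;> cases max_cases (-a - lam) 0 <;> linarith
  · simpa using hlam
  · rw [Real.sign_of_pos h, abs_of_pos h, abs_le]
    constructor <;> cases max_cases (a - lam) 0 <;> linarith

theorem sub_sign_mul_max_abs_sub_mul_self (lam a : ℝ) :
    (a - Real.sign a * max (|a| - lam) 0) * (Real.sign a * max (|a| - lam) 0) =
      lam * |Real.sign a * max (|a| - lam) 0| := by
  rcases lt_trichotomy a 0 with h | rfl | h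
  · rw [Real.sign_of_neg h, abs_of_neg h]
    rcases max_cases (-a - lam) 0 with ⟨hm, hc⟩ | ⟨hm, -⟩ <;> rw [hm]
    · rw [abs_of_nonpos (by linarith)]; ring
    · simp
  · simp
  · rw [Real.sign_of_pos h, abs_of_pos h]
    rcases max_cases (a - lam) 0 with ⟨hm, hc⟩ | ⟨hm, -⟩ <;> rw [hm]
    · rw [abs_of_nonneg (by linarith)]; ring
    · simp

theorem inner_sub_softThresh_le {n : ℕ} {lam : ℝ} (hlam : 0 ≤ lam)
    (w z : EuclideanSpace ℝ (Fin n)) :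
    inner ℝ (z - softThresh lam w) (w - softThresh lam w) ≤
      lam * (l1norm z - l1norm (softThresh lam w)) := by
  set p := softThresh lam w
  have hdist (i : Fin n) : |w i - p i| ≤ lam := abs_sub_sign_mul_max_abs_sub_le hlam (w i)
  have hmul (i : Fin n) : (w i - p i) * p i = lam * |p i| :=
    sub_sign_mul_max_abs_sub_mul_self lam (w i)
  have hcoord (i : Fin n) : (w i - p i) * z i ≤ lam * |z i| :=
    calc (w i - p i) * z i ≤ |w i - p i| * |z i| := by rw [← abs_mul]; exact le_abs_self _
      _ ≤ lam * |z i| := mul_le_mul_of_nonneg_right (hdist i) (abs_nonneg _)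
  calc inner ℝ (z - p) (w - p) = ∑ i, ((w i - p i) * z i - lam * |p i|) := by
        simp only [PiLp.inner_apply, PiLp.sub_apply, RCLike.inner_apply, conj_trivial]
        refine sum_congr rfl fun i _ => ?_
        rw [← hmul i]; ring
    _ ≤ ∑ i, (lam * |z i| - lam * |p i|) := sum_le_sum fun i _ => sub_le_sub_right (hcoord i) _
    _ = lam * (l1norm z - l1norm p) := by simp only [l1norm, mul_sub, mul_sum, sum_sub_distrib]

theorem norm_sub_sq_add_norm_sub_sq_le_of_inner_nonpos {E : Type*} [NormedAddCommGroup E]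
    [InnerProductSpace ℝ E] {p w z : E} (h : inner ℝ (z - p) (w - p) ≤ 0) :
    ‖z - p‖ ^ 2 + ‖p - w‖ ^ 2 ≤ ‖z - w‖ ^ 2 := by
  have hsplit : ‖z - w‖ ^ 2 = ‖z - p‖ ^ 2 - 2 * inner ℝ (z - p) (w - p) + ‖w - p‖ ^ 2 := by
    rw [← norm_sub_sq_real, sub_sub_sub_cancel_right]
  rw [hsplit, norm_sub_rev p w]
  linarith

theorem softThresh_is_proj_l1ball_general {n : ℕ} (B : ℝ)
    (w : EuclideanSpace ℝ (Fin n))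
    (lam : ℝ) (hlam : 0 < lam) (hS : l1norm (softThresh lam w) = B) :
    l1norm (softThresh lam w) ≤ B ∧
    (∀ z : EuclideanSpace ℝ (Fin n), l1norm z ≤ B →
      ‖softThresh lam w - w‖ ≤ ‖z - w‖) ∧
    (∀ z : EuclideanSpace ℝ (Fin n), l1norm z ≤ B →
      ‖z - w‖ = ‖softThresh lam w - w‖ → z = softThresh lam w) := by
  have pythagoras (z : EuclideanSpace ℝ (Fin n)) (hz : l1norm z ≤ B) :
      ‖z - softThresh lam w‖ ^ 2 + ‖softThresh lam w - w‖ ^ 2 ≤ ‖z - w‖ ^ 2 := by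
    refine norm_sub_sq_add_norm_sub_sq_le_of_inner_nonpos ?_
    calc _ ≤ lam * (l1norm z - l1norm (softThresh lam w)) := inner_sub_softThresh_le hlam.le w z
      _ ≤ 0 := mul_nonpos_of_nonneg_of_nonpos hlam.le (by linarith)
  refine ⟨hS.le, fun z hz => ?_, fun z hz hzw => ?_⟩
  · exact (pow_le_pow_iff_left₀ (norm_nonneg _) (norm_nonneg _) two_ne_zero).mp
      ((le_add_of_nonneg_left (sq_nonneg _)).trans (pythagoras z hz))
  · have hsq := pythagoras z hz
    rw [hzw, add_le_iff_nonpos_left] at hsq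
    exact norm_sub_eq_zero_iff.mp ((sq_nonpos_iff _).mp hsq)

/-- If `‖w‖₁ > B̃` and `λ* > 0` is such that `‖S_{λ*}(w)‖₁ = B̃`, then `S_{λ*}(w)` is
the (unique) Euclidean projection of `w` onto the ℓ1-ball of radius `B̃`. -/
theorem softThresh_is_proj_l1ball {n : ℕ} (B : ℝ) (hB : 0 < B)
    (w : EuclideanSpace ℝ (Fin n)) (hw : B < l1norm w)
    (lam : ℝ) (hlam : 0 < lam) (hS : l1norm (softThresh lam w) = B) :
    l1norm (softThresh lam w) ≤ B ∧
    (∀ z : EuclideanSpace ℝ (Fin n), l1norm z ≤ B →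
      ‖softThresh lam w - w‖ ≤ ‖z - w‖) ∧
    (∀ z : EuclideanSpace ℝ (Fin n), l1norm z ≤ B →
      ‖z - w‖ = ‖softThresh lam w - w‖ → z = softThresh lam w) :=
  softThresh_is_proj_l1ball_general B w lam hlam hS
end

section
/- If 0 ≤ P ≤ 1 and 0 < Δt ≤ 1, then the explicit Euler update v_i^{n+1} = v_i^n + (Δt/N)Σ_j P(‖x_i^n−x_j^n‖)(v_j^n−v_i^n) expresses each v_i^{n+1} as a convex combination of {v_1^n,…,v_N^n}; consequently the convex hull of the velocities is non-increasing and max_i ‖v_i^n − v̄‖ is non-increasing in n. -/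
open Finset

/-!
Writing `a_ij = (Δt/N) P(‖x_i - x_j‖)`, the update reads
`v_i' = (1 - ∑_j a_ij) v_i + ∑_j a_ij v_j`; since `0 ≤ a_ij` and `∑_j a_ij ≤ Δt ≤ 1`, these
coefficients are convex weights. Hence every `v_i'` lies in the convex hull of the `v_j`, and
the distance to any fixed point, being convex, is maximised over that hull at some `v_j`.
-/

theorem exists_convex_weights_self_add_sum_smul_sub {R E ι : Type*} [CommRing R]
    [PartialOrder R] [IsOrderedRing R] [AddCommGroup E] [Module R E] [Fintype ι] [DecidableEq ι]
    (v : ι → E) (i : ι) {a : ι → R} (ha : ∀ j, 0 ≤ a j) (hsum : ∑ j, a j ≤ 1) :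
    ∃ c : ι → R, (∀ j, 0 ≤ c j) ∧ ∑ j, c j = 1 ∧
      v i + ∑ j, a j • (v j - v i) = ∑ j, c j • v j := by
  refine ⟨a + Pi.single i (1 - ∑ j, a j), fun j => ?_, ?_, ?_⟩
  · rcases eq_or_ne j i with rfl | hj
    · simpa using add_nonneg (ha j) (sub_nonneg.2 hsum)
    · simpa [hj] using ha j
  · simp [sum_add_distrib]
  · simp only [Pi.add_apply, add_smul, sum_add_distrib, Pi.single_apply, ite_smul, zero_smul,
      sum_ite_eq', mem_univ, if_true, smul_sub, sum_sub_distrib, ← sum_smul, sub_smul, one_smul]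
    abel

theorem convexHull_range_subset_of_convex_weights {R E ι κ : Type*} [Field R] [LinearOrder R]
    [IsStrictOrderedRing R] [AddCommGroup E] [Module R E] [Fintype ι] {v : ι → E} {w : κ → E}
    (hw : ∀ k, ∃ c : ι → R, (∀ j, 0 ≤ c j) ∧ ∑ j, c j = 1 ∧ w k = ∑ j, c j • v j) :
    convexHull R (Set.range w) ⊆ convexHull R (Set.range v) := by
  refine convexHull_min ?_ (convex_convexHull R _)
  rintro _ ⟨k, rfl⟩
  obtain ⟨c, hc0, hc1, hk⟩ := hw k
  rw [hk]
  exact (convex_convexHull R _).sum_mem (fun j _ => hc0 j) hc1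
    fun j _ => subset_convexHull R _ ⟨j, rfl⟩

theorem sup'_norm_sub_le_of_range_subset_convexHull {E ι κ : Type*} [NormedAddCommGroup E]
    [NormedSpace ℝ E] [Fintype ι] [Nonempty ι] [Fintype κ] [Nonempty κ] {v : ι → E} {w : κ → E}
    (h : Set.range w ⊆ convexHull ℝ (Set.range v)) (m : E) :
    univ.sup' univ_nonempty (fun k => ‖w k - m‖) ≤
      univ.sup' univ_nonempty (fun j => ‖v j - m‖) := by
  refine sup'_le _ _ fun k _ => ?_
  obtain ⟨_, ⟨j, rfl⟩, hj⟩ := convexHull_exists_dist_ge (h ⟨k, rfl⟩) m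
  rw [dist_eq_norm, dist_eq_norm] at hj
  exact hj.trans (le_sup' (fun j => ‖v j - m‖) (mem_univ j))

/-- If `0 ≤ P ≤ 1` and `0 < Δt ≤ 1`, the explicit Euler update writes each new
velocity as a convex combination of the old ones; consequently the convex hull of
the velocities is non-increasing and `max_i ‖v_i - v̄‖` is non-increasing. -/
theorem discrete_cucker_smale_convex_combination {d N : ℕ} (hN : 0 < N)
    (P : ℝ → ℝ) (hP0 : ∀ r, 0 ≤ P r) (hP1 : ∀ r, P r ≤ 1)
    (Δt : ℝ) (hΔt : 0 < Δt) (hΔt1 : Δt ≤ 1)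
    (x v v' : Fin N → EuclideanSpace ℝ (Fin d))
    (hupd : ∀ i, v' i = v i +
      (Δt / (N : ℝ)) • ∑ j, P ‖x i - x j‖ • (v j - v i)) :
    (∀ i, ∃ c : Fin N → ℝ, (∀ j, 0 ≤ c j) ∧ (∑ j, c j) = 1 ∧
        v' i = ∑ j, c j • v j) ∧
    convexHull ℝ (Set.range v') ⊆ convexHull ℝ (Set.range v) ∧
    (haveI : Nonempty (Fin N) := Fin.pos_iff_nonempty.mp hN
     (Finset.univ.sup' Finset.univ_nonempty
        fun i => ‖v' i - (1 / (N : ℝ)) • ∑ j, v j‖) ≤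
      Finset.univ.sup' Finset.univ_nonempty
        fun i => ‖v i - (1 / (N : ℝ)) • ∑ j, v j‖) := by
  have : Nonempty (Fin N) := Fin.pos_iff_nonempty.mp hN
  have hstep : 0 ≤ Δt / N := by positivity
  have hrow_sum (i : Fin N) : ∑ j, Δt / N * P ‖x i - x j‖ ≤ 1 :=
    calc ∑ j, Δt / N * P ‖x i - x j‖ ≤ ∑ _j : Fin N, Δt / N :=
          sum_le_sum fun j _ => mul_le_of_le_one_right hstep (hP1 _)
      _ = Δt := by simp [field]
      _ ≤ 1 := hΔt1
  have hconv (i : Fin N) : ∃ c : Fin N → ℝ, (∀ j, 0 ≤ c j) ∧ (∑ j, c j) = 1 ∧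
      v' i = ∑ j, c j • v j := by
    simp only [hupd i, smul_sum, smul_smul]
    exact exists_convex_weights_self_add_sum_smul_sub v i
      (fun j => mul_nonneg hstep (hP0 _)) (hrow_sum i)
  have hhull := convexHull_range_subset_of_convex_weights hconv
  exact ⟨hconv, hhull, sup'_norm_sub_le_of_range_subset_convexHull
    ((subset_convexHull ℝ _).trans hhull) _⟩
end
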